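/- Let K : ℝ^m → ℝ satisfy either (a) K is Lipschitz with constant Λ₁ and K(w) = 0 for ‖w‖ > L, or (b) K is differentiable with ‖∂K/∂w‖_∞ ≤ Λ₁ everywhere and ‖∂K/∂w‖_∞ ≤ Λ₁‖w‖^{-ν} for ‖w‖ > L, with ν > 1. Then there exists a bounded integrable function K* : ℝ^m → [0,∞) such that for all w₁, w₂ with ‖w₁ − w₂‖ ≤ δ ≤ L, |K(w₂) − K(w₁)| ≤ δ K*(w₁). In case (a) one may take K*(u) = 2m Λ₁ 𝟙(‖u‖ ≤ 2L); in case (b), K*(u) = 2m[Λ₁ 𝟙(‖u‖ ≤ 2L) + (‖u‖ − L)^{-ν} 𝟙(‖u‖ > 2L)]. -/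

import Mathlib

open MeasureTheory

/-!
Both hypotheses make `K` globally `Λ₁`-Lipschitz, which settles the case `‖w₁‖ ≤ 2L`. When
`‖w₁‖ > 2L`, every point within `δ ≤ L` of `w₁` has norm at least `‖w₁‖ - L > L`, so there `K`
either vanishes (case (a)) or has derivative at most `Λ₁ (‖w₁‖ - L)^(-ν)` (case (b)). The
resulting majorant is bounded by a multiple of `(1 + ‖u‖)^(-ν)`, which is integrable because `ν`
exceeds the dimension.
-/

section DecayMajorant

variable {E : Type*} [NormedAddCommGroup E] {Λ L ν : ℝ}

/-- The paper's `K*` of case (b), without its factor `2m`, which bounding the operator norm of the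
derivative directly makes unnecessary. It serves case (a) as well. -/
noncomputable def decayMajorant (Λ L ν : ℝ) (u : E) : ℝ :=
  if ‖u‖ ≤ 2 * L then Λ else Λ * (‖u‖ - L) ^ (-ν)

lemma decayMajorant_nonneg (hΛ : 0 ≤ Λ) (u : E) : 0 ≤ decayMajorant Λ L ν u := by
  unfold decayMajorant
  split_ifs with hu
  · exact hΛ
  · exact mul_nonneg hΛ (Real.rpow_nonneg (by linarith [norm_nonneg u]) _)

lemma rpow_neg_le_mul_rpow_neg {a c x ν : ℝ} (ha : 0 < a) (hc : 0 < c) (hx : 0 < x)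
    (hν : 0 ≤ ν) (h : a ≤ c * x) : x ^ (-ν) ≤ c ^ ν * a ^ (-ν) :=
  calc x ^ (-ν) = c ^ ν * (c * x) ^ (-ν) := by
        rw [Real.mul_rpow hc.le hx.le, Real.rpow_neg hc.le ν,
          mul_inv_cancel_left₀ (Real.rpow_pos_of_pos hc ν).ne']
    _ ≤ c ^ ν * a ^ (-ν) :=
        mul_le_mul_of_nonneg_left (Real.rpow_le_rpow_of_nonpos ha h (neg_nonpos.2 hν))
          (by positivity)

lemma one_add_le_mul_sub {L t : ℝ} (hL : 0 < L) (ht : 2 * L < t) :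
    1 + t ≤ (2 + 1 / L + 2 * L) * (t - L) := by
  have : 1 ≤ (t - L) / L := by rw [le_div_iff₀ hL]; linarith
  have : 1 + t ≤ (2 + 1 / L) * (t - L) := by
    rw [add_mul, one_div_mul_eq_div]; linarith
  nlinarith

lemma decayMajorant_le (hΛ : 0 ≤ Λ) (hL : 0 < L) (hν : 0 ≤ ν) (u : E) :
    decayMajorant Λ L ν u ≤ Λ * (2 + 1 / L + 2 * L) ^ ν * (1 + ‖u‖) ^ (-ν) := by
  have hc : 0 < 2 + 1 / L + 2 * L := by positivity
  have hu : 0 < 1 + ‖u‖ := by positivity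
  rw [mul_assoc]
  unfold decayMajorant
  split_ifs with h
  · calc Λ = Λ * (1 : ℝ) ^ (-ν) := by rw [Real.one_rpow, mul_one]
      _ ≤ _ := by
        gcongr
        refine rpow_neg_le_mul_rpow_neg hu hc one_pos hν ?_
        linarith [one_div_pos.2 hL]
  · have h : 2 * L < ‖u‖ := not_le.1 h
    gcongr
    exact rpow_neg_le_mul_rpow_neg hu hc (by linarith) hν (one_add_le_mul_sub hL h)

lemma decayMajorant_le_const (hΛ : 0 ≤ Λ) (hL : 0 < L) (hν : 0 ≤ ν) (u : E) :
    decayMajorant Λ L ν u ≤ Λ * (2 + 1 / L + 2 * L) ^ ν := by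
  refine (decayMajorant_le hΛ hL hν u).trans (mul_le_of_le_one_right (by positivity) ?_)
  exact Real.rpow_le_one_of_one_le_of_nonpos (by linarith [norm_nonneg u]) (neg_nonpos.2 hν)

lemma integrable_decayMajorant [NormedSpace ℝ E] [FiniteDimensional ℝ E] [MeasurableSpace E]
    [BorelSpace E] (μ : Measure E) [μ.IsAddHaarMeasure] (hΛ : 0 ≤ Λ) (hL : 0 < L)
    (hν : (Module.finrank ℝ E : ℝ) < ν) : Integrable (decayMajorant Λ L ν) μ := by
  have hν₀ : 0 ≤ ν := (Nat.cast_nonneg _).trans hν.le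
  refine ((integrable_one_add_norm hν).const_mul (Λ * (2 + 1 / L + 2 * L) ^ ν)).mono' ?_
    (.of_forall fun u => ?_)
  · unfold decayMajorant
    exact (Measurable.ite (measurableSet_le measurable_norm measurable_const) measurable_const
      (by fun_prop)).aestronglyMeasurable
  · rw [Real.norm_of_nonneg (decayMajorant_nonneg hΛ u)]
    exact decayMajorant_le hΛ hL hν₀ u

end DecayMajorant

section Increments

variable {E : Type*} [NormedAddCommGroup E] {K : E → ℝ} {Λ L ν δ : ℝ} {w₁ w₂ : E}

lemma lt_norm_of_norm_sub_le (hδL : δ ≤ L) (h : ‖w₁ - w₂‖ ≤ δ) (hw₁ : 2 * L < ‖w₁‖) :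
    L < ‖w₂‖ := by
  linarith [norm_sub_norm_le w₁ w₂]

lemma abs_sub_le_of_eq_zero_of_lt_norm (hΛ : 0 ≤ Λ) (hvan : ∀ w, ‖w‖ > L → K w = 0)
    (hδ : 0 ≤ δ) (hδL : δ ≤ L) (h : ‖w₁ - w₂‖ ≤ δ) (hw₁ : 2 * L < ‖w₁‖) :
    |K w₂ - K w₁| ≤ δ * (Λ * (‖w₁‖ - L) ^ (-ν)) := by
  rw [hvan w₁ (by linarith), hvan w₂ (lt_norm_of_norm_sub_le hδL h hw₁), sub_zero, abs_zero]
  exact mul_nonneg hδ (mul_nonneg hΛ (Real.rpow_nonneg (by linarith) _))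

lemma abs_sub_le_mul_decayMajorant (hΛ : 0 ≤ Λ) (hlip : ∀ w w', |K w - K w'| ≤ Λ * ‖w - w'‖)
    (hfar : ∀ {δ : ℝ} {w₁ w₂ : E}, 0 ≤ δ → δ ≤ L → ‖w₁ - w₂‖ ≤ δ → 2 * L < ‖w₁‖ →
      |K w₂ - K w₁| ≤ δ * (Λ * (‖w₁‖ - L) ^ (-ν)))
    (hδ : 0 ≤ δ) (hδL : δ ≤ L) (h : ‖w₁ - w₂‖ ≤ δ) :
    |K w₂ - K w₁| ≤ δ * decayMajorant Λ L ν w₁ := by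
  unfold decayMajorant
  split_ifs with hw₁
  · calc |K w₂ - K w₁| ≤ Λ * ‖w₂ - w₁‖ := hlip w₂ w₁
      _ ≤ δ * Λ := by rw [mul_comm δ, norm_sub_rev]; gcongr
  · exact hfar hδ hδL h (not_le.1 hw₁)

variable [NormedSpace ℝ E]

lemma abs_sub_le_of_norm_fderiv_le_rpow_neg (hΛ : 0 ≤ Λ) (hν : 0 ≤ ν)
    (hdiff : Differentiable ℝ K) (htail : ∀ w, ‖w‖ > L → ‖fderiv ℝ K w‖ ≤ Λ * ‖w‖ ^ (-ν))
    (hδ : 0 ≤ δ) (hδL : δ ≤ L) (h : ‖w₁ - w₂‖ ≤ δ) (hw₁ : 2 * L < ‖w₁‖) :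
    |K w₂ - K w₁| ≤ δ * (Λ * (‖w₁‖ - L) ^ (-ν)) := by
  have hball : ∀ x ∈ Metric.closedBall w₁ δ, ‖fderiv ℝ K x‖ ≤ Λ * (‖w₁‖ - L) ^ (-ν) := by
    intro x hx
    rw [Metric.mem_closedBall, dist_comm, dist_eq_norm] at hx
    have hx_far : ‖w₁‖ - L ≤ ‖x‖ := by linarith [norm_sub_norm_le w₁ x]
    calc ‖fderiv ℝ K x‖ ≤ Λ * ‖x‖ ^ (-ν) := htail x (lt_norm_of_norm_sub_le hδL hx hw₁)
      _ ≤ Λ * (‖w₁‖ - L) ^ (-ν) := mul_le_mul_of_nonneg_left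
        (Real.rpow_le_rpow_of_nonpos (by linarith) hx_far (neg_nonpos.2 hν)) hΛ
  have hw₂ : w₂ ∈ Metric.closedBall w₁ δ := by rwa [Metric.mem_closedBall, dist_comm, dist_eq_norm]
  calc |K w₂ - K w₁| ≤ Λ * (‖w₁‖ - L) ^ (-ν) * ‖w₂ - w₁‖ :=
        (convex_closedBall w₁ δ).norm_image_sub_le_of_norm_fderiv_le
          (fun x _ => hdiff x) hball (Metric.mem_closedBall_self hδ) hw₂
    _ ≤ δ * (Λ * (‖w₁‖ - L) ^ (-ν)) := by
        rw [mul_comm δ, norm_sub_rev]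
        gcongr
        exact mul_nonneg hΛ (Real.rpow_nonneg (by linarith) _)

end Increments

theorem statement13_general {m : ℕ} (K : (Fin m → ℝ) → ℝ)
    (Λ₁ L ν : ℝ) (hΛ₁ : 0 ≤ Λ₁) (hL : 0 < L) (hνm : (m : ℝ) < ν)
    (hcase :
      ((∀ w, ‖w‖ > L → K w = 0) ∧ ∀ w w', |K w - K w'| ≤ Λ₁ * ‖w - w'‖) ∨
      (Differentiable ℝ K ∧ (∀ w, ‖fderiv ℝ K w‖ ≤ Λ₁) ∧
        ∀ w, ‖w‖ > L → ‖fderiv ℝ K w‖ ≤ Λ₁ * ‖w‖ ^ (-ν))) :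
    ∃ Kstar : (Fin m → ℝ) → ℝ,
      (∀ u, 0 ≤ Kstar u) ∧
      (∃ C : ℝ, ∀ u, Kstar u ≤ C) ∧
      Integrable Kstar (volume : Measure (Fin m → ℝ)) ∧
      ∀ w₁ w₂ : Fin m → ℝ, ∀ δ : ℝ, 0 ≤ δ → δ ≤ L → ‖w₁ - w₂‖ ≤ δ →
        |K w₂ - K w₁| ≤ δ * Kstar w₁ := by
  have hν : 0 ≤ ν := m.cast_nonneg.trans hνm.le
  refine ⟨decayMajorant Λ₁ L ν, decayMajorant_nonneg hΛ₁, ⟨_, decayMajorant_le_const hΛ₁ hL hν⟩,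
    integrable_decayMajorant _ hΛ₁ hL (by simpa using hνm), fun w₁ w₂ δ hδ hδL h => ?_⟩
  rcases hcase with ⟨hvan, hlip⟩ | ⟨hdiff, hbd, htail⟩
  · exact abs_sub_le_mul_decayMajorant hΛ₁ hlip (abs_sub_le_of_eq_zero_of_lt_norm hΛ₁ hvan)
      hδ hδL h
  · have hlip : ∀ w w', |K w - K w'| ≤ Λ₁ * ‖w - w'‖ := fun w w' =>
      convex_univ.norm_image_sub_le_of_norm_fderiv_le (fun x _ => hdiff x) (fun x _ => hbd x)
        (Set.mem_univ _) (Set.mem_univ _)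
    exact abs_sub_le_mul_decayMajorant hΛ₁ hlip
      (abs_sub_le_of_norm_fderiv_le_rpow_neg hΛ₁ hν hdiff htail) hδ hδL h

/-- if `K : ℝ^m → ℝ` is either (a) `Λ₁`-Lipschitz with `K = 0` outside the ball
of radius `L`, or (b) differentiable with `‖∂K/∂w‖ ≤ Λ₁` everywhere and
`‖∂K/∂w‖ ≤ Λ₁ ‖w‖^{−ν}` for `‖w‖ > L` (with `ν > 1`, and `ν > m` for integrability of the
tail), then there is a bounded, integrable, nonnegative `K*` such that
`|K(w₂) − K(w₁)| ≤ δ K*(w₁)` whenever `‖w₁ − w₂‖ ≤ δ ≤ L`. -/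
theorem statement13 {m : ℕ} (hm : 1 ≤ m) (K : (Fin m → ℝ) → ℝ) (hKmeas : Measurable K)
    (Λ₁ L ν : ℝ) (hΛ₁ : 0 ≤ Λ₁) (hL : 0 < L) (hν₁ : 1 < ν) (hνm : (m : ℝ) < ν)
    (hcase :
      ((∀ w, ‖w‖ > L → K w = 0) ∧ ∀ w w', |K w - K w'| ≤ Λ₁ * ‖w - w'‖) ∨
      (Differentiable ℝ K ∧ (∀ w, ‖fderiv ℝ K w‖ ≤ Λ₁) ∧
        ∀ w, ‖w‖ > L → ‖fderiv ℝ K w‖ ≤ Λ₁ * ‖w‖ ^ (-ν))) :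
    ∃ Kstar : (Fin m → ℝ) → ℝ,
      (∀ u, 0 ≤ Kstar u) ∧
      (∃ C : ℝ, ∀ u, Kstar u ≤ C) ∧
      Integrable Kstar (volume : Measure (Fin m → ℝ)) ∧
      ∀ w₁ w₂ : Fin m → ℝ, ∀ δ : ℝ, 0 ≤ δ → δ ≤ L → ‖w₁ - w₂‖ ≤ δ →
        |K w₂ - K w₁| ≤ δ * Kstar w₁ :=
  statement13_general K Λ₁ L ν hΛ₁ hL hνm hcase
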